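/- arXiv:1903.11681 — 4 statements merged into one kernel-verified Lean document; each statement's English description precedes it below -/
import Mathlib

section
/- For every i-sequence (i_0, i_1, …, i_L) one has i_k ≠ 2 for all 1 ≤ k ≤ L, and for every j-sequence (j_0, …, j_{L'}) one has j_k ≠ 2 for all 1 ≤ k ≤ L'. -/
/-- The five affine types considered in the paper. -/
inductive AffCase : Type
  | E6 | E7 | E8 | F4 | E62
  deriving DecidableEq

open AffCase

/-- The rank `n` of the underlying finite-type algebra `g_0`. -/
def rank : AffCase → ℕ
  | E6 => 6 | E7 => 7 | E8 => 8 | F4 => 4 | E62 => 4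

/-- Edges of the Dynkin diagram of `g_0`. -/
def adj : AffCase → List (ℕ × ℕ)
  | E6  => [(1,2),(2,3),(2,4),(3,5),(4,6)]
  | E7  => [(1,2),(2,3),(3,4),(3,5),(5,6),(6,7)]
  | E8  => [(1,2),(2,3),(3,4),(4,5),(5,6),(5,7),(7,8)]
  | F4  => [(1,2),(2,3),(3,4)]
  | E62 => [(1,2),(2,3),(3,4)]

/-- The Cartan matrix `c_{ij}` of `g_0`. -/
def cartan (c : AffCase) (i j : ℕ) : ℤ :=
  if i = j then 2
  else if (i, j) ∈ adj c ∨ (j, i) ∈ adj c then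
    if (c = F4 ∧ i = 3 ∧ j = 2) ∨ (c = E62 ∧ i = 2 ∧ j = 3) then -2 else -1
  else 0

/-- The index set `I_0 = {1,…,n}`. -/
def I0 (c : AffCase) : Finset ℕ := Finset.Icc 1 (rank c)

/-- The index set `I_{01} = I_0 \ {1} = {2,…,n}`. -/
def I01 (c : AffCase) : Finset ℕ := Finset.Icc 2 (rank c)

/-- The constant `c` : `2` in case `F4^(1)`, `1` otherwise. -/
def cconst : AffCase → ℤ
  | F4 => 2
  | _ => 1

/-- The pairing `⟨h_i, v⟩ = Σ_j c_{ij} v_j`. -/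
def pairing (c : AffCase) (i : ℕ) (v : ℕ → ℤ) : ℤ :=
  ∑ j ∈ I0 c, cartan c i j * v j

/-- The standard basis vector `e_i` of the root lattice. -/
def stdb (i : ℕ) : ℕ → ℤ := fun j => if j = i then 1 else 0

/-- The simple reflection `σ_i(v) = v − ⟨h_i, v⟩ e_i`. -/
def sref (c : AffCase) (i : ℕ) (v : ℕ → ℤ) : ℕ → ℤ :=
  fun j => v j - if j = i then pairing c i v else 0

/-- `srefs c f k v = σ_{f k} ⋯ σ_{f 1} (v)` (note: `f 0` is not applied). -/
def srefs (c : AffCase) (f : ℕ → ℕ) : ℕ → (ℕ → ℤ) → (ℕ → ℤ)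
  | 0, v => v
  | k+1, v => sref c (f (k+1)) (srefs c f k v)

/-- The root `θ_1`. -/
def theta1 (c : AffCase) : ℕ → ℤ := fun j =>
  (match c with
    | E6  => ([0,0,1,1,1,1,1] : List ℤ)
    | E7  => ([0,0,1,2,1,2,2,1] : List ℤ)
    | E8  => ([0,0,1,2,3,4,2,3,2] : List ℤ)
    | F4  => ([0,0,1,2,2] : List ℤ)
    | E62 => ([0,0,1,1,1] : List ℤ)).getD j 0

/-- The subset `J ⊆ I_0`. -/
def Jset : AffCase → Finset ℕ
  | E6  => {2,3,4}
  | E7  => {2,3,4,5}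
  | E8  => {2,3,4,5,6,7}
  | F4  => {2,3}
  | E62 => {2,3}

/-- The root `θ_J`. -/
def thetaJ (c : AffCase) : ℕ → ℤ := fun j =>
  (match c with
    | E6  => ([0,0,1,1,1,0,0] : List ℤ)
    | E7  => ([0,0,1,2,1,1,0,0] : List ℤ)
    | E8  => ([0,0,1,2,2,2,1,1,0] : List ℤ)
    | F4  => ([0,0,1,2,0] : List ℤ)
    | E62 => ([0,0,1,1,0] : List ℤ)).getD j 0

/-- `(L, f)` encodes an i-sequence `(i_0, …, i_L) = (f 0, …, f L)`. -/
def IsISeq (c : AffCase) (L : ℕ) (f : ℕ → ℕ) : Prop :=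
  (∀ k ≤ L, f k ∈ I01 c) ∧ f 0 = 2 ∧
  (∀ k, 1 ≤ k → k ≤ L →
    pairing c (f k) (srefs c f (k-1) (stdb 2)) = -(cconst c)) ∧
  srefs c f L (stdb 2) = theta1 c

/-- `(L, f)` encodes a j-sequence `(j_0, …, j_L) = (f 0, …, f L)`. -/
def IsJSeq (c : AffCase) (L : ℕ) (f : ℕ → ℕ) : Prop :=
  (∀ k ≤ L, f k ∈ Jset c) ∧ f 0 = 2 ∧
  (∀ k, 1 ≤ k → k ≤ L →
    pairing c (f k) (srefs c f (k-1) (stdb 2)) = -(cconst c)) ∧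
  srefs c f L (stdb 2) = thetaJ c

lemma cconst_pos (c : AffCase) : 0 < cconst c := by cases c <;> decide

lemma srefs_two (c : AffCase) (L : ℕ) (f : ℕ → ℕ)
    (hpair : ∀ k, 1 ≤ k → k ≤ L →
      pairing c (f k) (srefs c f (k-1) (stdb 2)) = -(cconst c)) :
    ∀ k, k ≤ L → srefs c f k (stdb 2) 2 =
      1 + cconst c * ((Finset.range k).filter (fun j => f (j+1) = 2)).card := by
  intro k
  induction k with
  | zero => intro _; simp [srefs, stdb]
  | succ k ih =>
    intro hk
    have ihk := ih (Nat.le_of_succ_le hk)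
    show sref c (f (k+1)) (srefs c f k (stdb 2)) 2 = _
    by_cases h2 : f (k+1) = 2
    · have hp := hpair (k+1) (Nat.le_add_left 1 k) hk
      simp only [Nat.add_sub_cancel] at hp
      have : (Finset.range (k+1)).filter (fun j => f (j+1) = 2) =
          insert k ((Finset.range k).filter (fun j => f (j+1) = 2)) := by
        rw [Finset.range_add_one, Finset.filter_insert, if_pos h2]
      rw [this, Finset.card_insert_of_notMem (by simp)]
      rw [h2] at hp
      simp only [sref, h2, if_pos rfl, hp, ihk]
      push_cast
      ring
    · have : (Finset.range (k+1)).filter (fun j => f (j+1) = 2) =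
          (Finset.range k).filter (fun j => f (j+1) = 2) := by
        rw [Finset.range_add_one, Finset.filter_insert, if_neg h2]
      rw [this]
      simp only [sref, if_neg (fun h : (2:ℕ) = f (k+1) => h2 h.symm), sub_zero, ihk]

lemma key (c : AffCase) (L : ℕ) (f : ℕ → ℕ)
    (hpair : ∀ k, 1 ≤ k → k ≤ L →
      pairing c (f k) (srefs c f (k-1) (stdb 2)) = -(cconst c))
    (hend : srefs c f L (stdb 2) 2 = 1) :
    ∀ k, 1 ≤ k → k ≤ L → f k ≠ 2 := by
  have h := srefs_two c L f hpair L le_rfl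
  rw [hend] at h
  have hcard : ((Finset.range L).filter (fun j => f (j+1) = 2)).card = 0 := by
    have h0 : cconst c * (((Finset.range L).filter (fun j => f (j+1) = 2)).card : ℤ) = 0 := by
      linarith
    rcases mul_eq_zero.mp h0 with h1 | h1
    · exact absurd h1 (cconst_pos c).ne'
    · exact_mod_cast h1
  rw [Finset.card_eq_zero] at hcard
  intro k hk1 hkL hf2
  have : k - 1 ∈ (Finset.range L).filter (fun j => f (j+1) = 2) := by
    refine Finset.mem_filter.mpr ⟨Finset.mem_range.mpr (by omega), ?_⟩
    have : k - 1 + 1 = k := by omega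
    rw [this]; exact hf2
  rw [hcard] at this
  exact absurd this (Finset.notMem_empty _)

theorem stmt1 (c : AffCase) :
    (∀ (L : ℕ) (f : ℕ → ℕ), IsISeq c L f → ∀ k, 1 ≤ k → k ≤ L → f k ≠ 2) ∧
    (∀ (L' : ℕ) (g : ℕ → ℕ), IsJSeq c L' g → ∀ k, 1 ≤ k → k ≤ L' → g k ≠ 2) := by
  constructor
  · rintro L f ⟨-, -, hpair, hend⟩
    refine key c L f hpair ?_
    rw [hend]; cases c <;> rfl
  · rintro L g ⟨-, -, hpair, hend⟩
    refine key c L g hpair ?_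
    rw [hend]; cases c <;> rfl
end

section
/- Let (i_0, i_1, …, i_L) be an i-sequence and α ∈ R^+. If σ_{i_1}σ_{i_2}⋯σ_{i_L}(α) ∈ −R^+ (i.e., (s_{i_L}⋯s_{i_1})^{−1}(α) is a negative root), then B(α, θ_1) > 0; equivalently ⟨h_α, θ_1⟩ = 2B(α,θ_1)/B(α,α) > 0. Likewise, if (j_0, …, j_{L'}) is a j-sequence, α ∈ R^+ and σ_{j_1}⋯σ_{j_{L'}}(α) ∈ −R^+, then B(α, θ_J) > 0. -/
open AffCase

/-- `wordApply c [a, b, …, z] v = σ_a (σ_b ( ⋯ (σ_z v)))` : the head of the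
list is applied last. -/
def wordApply (c : AffCase) (w : List ℕ) (v : ℕ → ℤ) : ℕ → ℤ :=
  w.foldr (fun i u => sref c i u) v

/-- The root system `R = {w(e_i) : w ∈ W, i ∈ I_0}` of `g_0`. -/
def Roots (c : AffCase) : Set (ℕ → ℤ) :=
  {α | ∃ w : List ℕ, (∀ i ∈ w, i ∈ I0 c) ∧ ∃ i ∈ I0 c, α = wordApply c w (stdb i)}

/-- The set `R^+` of positive roots. -/
def PosRoots (c : AffCase) : Set (ℕ → ℤ) :=
  {α | α ∈ Roots c ∧ ∀ j, 0 ≤ α j}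

/-- The symmetrizing coefficients `d_i`. -/
def dcoef (c : AffCase) (i : ℕ) : ℤ :=
  match c with
  | AffCase.F4  => if i ≤ 2 then 2 else 1
  | AffCase.E62 => if i ≤ 2 then 1 else 2
  | _ => 1

/-- The invariant symmetric bilinear form `B`, with `B(e_i, e_j) = d_i c_{ij}`. -/
def bform (c : AffCase) (u v : ℕ → ℤ) : ℤ :=
  ∑ i ∈ I0 c, ∑ j ∈ I0 c, dcoef c i * cartan c i j * u i * v j


/-! ### Auxiliary: explicit root lists and tables -/

def rlE6_0 : List (List ℤ) :=
  [[0,-2,-3,-2,-2,-1,-1],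
   [0,-1,-3,-2,-2,-1,-1],
   [0,-1,-2,-2,-2,-1,-1],
   [0,-1,-2,-2,-1,-1,-1],
   [0,-1,-2,-2,-1,-1,0],
   [0,-1,-2,-1,-2,-1,-1],
   [0,-1,-2,-1,-2,0,-1],
   [0,-1,-2,-1,-1,-1,-1],
   [0,-1,-2,-1,-1,-1,0],
   [0,-1,-2,-1,-1,0,-1],
   [0,-1,-2,-1,-1,0,0],
   [0,-1,-1,-1,-1,-1,-1],
   [0,-1,-1,-1,-1,-1,0],
   [0,-1,-1,-1,-1,0,-1],
   [0,-1,-1,-1,-1,0,0],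
   [0,-1,-1,-1,0,-1,0],
   [0,-1,-1,-1,0,0,0],
   [0,-1,-1,0,-1,0,-1],
   [0,-1,-1,0,-1,0,0],
   [0,-1,-1,0,0,0,0],
   [0,-1,0,0,0,0,0],
   [0,0,-1,-1,-1,-1,-1],
   [0,0,-1,-1,-1,-1,0],
   [0,0,-1,-1,-1,0,-1]]

def rlE6_1 : List (List ℤ) :=
  [[0,0,-1,-1,-1,0,0],
   [0,0,-1,-1,0,-1,0],
   [0,0,-1,-1,0,0,0],
   [0,0,-1,0,-1,0,-1],
   [0,0,-1,0,-1,0,0],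
   [0,0,-1,0,0,0,0],
   [0,0,0,-1,0,-1,0],
   [0,0,0,-1,0,0,0],
   [0,0,0,0,-1,0,-1],
   [0,0,0,0,-1,0,0],
   [0,0,0,0,0,-1,0],
   [0,0,0,0,0,0,-1],
   [0,0,0,0,0,0,1],
   [0,0,0,0,0,1,0],
   [0,0,0,0,1,0,0],
   [0,0,0,0,1,0,1],
   [0,0,0,1,0,0,0],
   [0,0,0,1,0,1,0],
   [0,0,1,0,0,0,0],
   [0,0,1,0,1,0,0],
   [0,0,1,0,1,0,1],
   [0,0,1,1,0,0,0],
   [0,0,1,1,0,1,0],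
   [0,0,1,1,1,0,0]]

def rlE6_2 : List (List ℤ) :=
  [[0,0,1,1,1,0,1],
   [0,0,1,1,1,1,0],
   [0,0,1,1,1,1,1],
   [0,1,0,0,0,0,0],
   [0,1,1,0,0,0,0],
   [0,1,1,0,1,0,0],
   [0,1,1,0,1,0,1],
   [0,1,1,1,0,0,0],
   [0,1,1,1,0,1,0],
   [0,1,1,1,1,0,0],
   [0,1,1,1,1,0,1],
   [0,1,1,1,1,1,0],
   [0,1,1,1,1,1,1],
   [0,1,2,1,1,0,0],
   [0,1,2,1,1,0,1],
   [0,1,2,1,1,1,0],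
   [0,1,2,1,1,1,1],
   [0,1,2,1,2,0,1],
   [0,1,2,1,2,1,1],
   [0,1,2,2,1,1,0],
   [0,1,2,2,1,1,1],
   [0,1,2,2,2,1,1],
   [0,1,3,2,2,1,1],
   [0,2,3,2,2,1,1]]

def rootListE6 : List (List ℤ) :=
  rlE6_0 ++ rlE6_1 ++ rlE6_2

def tbE6_0 : List (List ℕ) :=
  [[1,0,0,0,0,0],
   [0,2,1,1,1,1],
   [2,1,5,3,2,2],
   [3,3,7,2,3,4],
   [4,4,8,4,4,3],
   [5,5,2,7,6,5],
   [6,6,6,9,5,6],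
   [7,11,3,5,9,8],
   [8,12,4,8,10,7],
   [9,13,9,6,7,10],
   [10,14,10,10,8,9],
   [21,7,11,11,13,12],
   [22,8,12,15,14,11],
   [23,9,17,13,11,14],
   [24,10,18,16,12,13],
   [25,15,15,12,16,15],
   [26,16,19,14,15,16],
   [27,17,13,17,17,18],
   [28,18,14,19,18,17],
   [29,20,16,18,19,19],
   [51,19,20,20,20,20],
   [11,21,21,21,23,22],
   [12,22,22,25,24,21],
   [13,23,27,23,21,24]]

def tbE6_1 : List (List ℕ) :=
  [[14,24,28,26,22,23],
   [15,30,25,22,26,25],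
   [16,31,29,24,25,26],
   [17,32,23,27,27,28],
   [18,33,24,29,28,27],
   [19,42,26,28,29,29],
   [30,25,34,30,31,30],
   [31,26,40,31,30,31],
   [32,27,32,35,32,33],
   [33,28,33,38,33,32],
   [34,34,30,34,37,34],
   [35,35,35,32,35,36],
   [36,36,36,39,36,35],
   [37,37,41,37,34,37],
   [38,43,38,33,38,39],
   [39,44,39,36,39,38],
   [40,45,31,40,41,40],
   [41,46,37,41,40,41],
   [52,29,45,43,42,42],
   [53,38,47,42,43,44],
   [54,39,48,44,44,43],
   [55,40,42,47,46,45],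
   [56,41,46,49,45,46],
   [57,47,43,45,49,48]]

def tbE6_2 : List (List ℕ) :=
  [[58,48,44,48,50,47],
   [59,49,49,46,47,50],
   [60,50,50,50,48,49],
   [20,52,51,51,51,51],
   [42,51,55,53,52,52],
   [43,53,57,52,53,54],
   [44,54,58,54,54,53],
   [45,55,52,57,56,55],
   [46,56,56,59,55,56],
   [47,61,53,55,59,58],
   [48,62,54,58,60,57],
   [49,63,59,56,57,60],
   [50,64,60,60,58,59],
   [61,57,61,61,63,62],
   [62,58,62,65,64,61],
   [63,59,67,63,61,64],
   [64,60,68,66,62,63],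
   [65,65,65,62,66,65],
   [66,66,69,64,65,66],
   [67,67,63,67,67,68],
   [68,68,64,69,68,67],
   [69,70,66,68,69,69],
   [71,69,70,70,70,70],
   [70,71,71,71,71,71]]

def tblE6 : List (List ℕ) :=
  tbE6_0 ++ tbE6_1 ++ tbE6_2

def etblE6 : List ℕ := [51,42,40,38,37,36]

def rlE7_0 : List (List ℤ) :=
  [[0,-2,-3,-4,-2,-3,-2,-1],
   [0,-1,-3,-4,-2,-3,-2,-1],
   [0,-1,-2,-4,-2,-3,-2,-1],
   [0,-1,-2,-3,-2,-3,-2,-1],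
   [0,-1,-2,-3,-2,-2,-2,-1],
   [0,-1,-2,-3,-2,-2,-1,-1],
   [0,-1,-2,-3,-2,-2,-1,0],
   [0,-1,-2,-3,-1,-3,-2,-1],
   [0,-1,-2,-3,-1,-2,-2,-1],
   [0,-1,-2,-3,-1,-2,-1,-1],
   [0,-1,-2,-3,-1,-2,-1,0],
   [0,-1,-2,-2,-1,-2,-2,-1],
   [0,-1,-2,-2,-1,-2,-1,-1],
   [0,-1,-2,-2,-1,-2,-1,0],
   [0,-1,-2,-2,-1,-1,-1,-1],
   [0,-1,-2,-2,-1,-1,-1,0],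
   [0,-1,-2,-2,-1,-1,0,0],
   [0,-1,-1,-2,-1,-2,-2,-1],
   [0,-1,-1,-2,-1,-2,-1,-1],
   [0,-1,-1,-2,-1,-2,-1,0],
   [0,-1,-1,-2,-1,-1,-1,-1],
   [0,-1,-1,-2,-1,-1,-1,0],
   [0,-1,-1,-2,-1,-1,0,0],
   [0,-1,-1,-1,-1,-1,-1,-1]]

def rlE7_1 : List (List ℤ) :=
  [[0,-1,-1,-1,-1,-1,-1,0],
   [0,-1,-1,-1,-1,-1,0,0],
   [0,-1,-1,-1,-1,0,0,0],
   [0,-1,-1,-1,0,-1,-1,-1],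
   [0,-1,-1,-1,0,-1,-1,0],
   [0,-1,-1,-1,0,-1,0,0],
   [0,-1,-1,-1,0,0,0,0],
   [0,-1,-1,0,0,0,0,0],
   [0,-1,0,0,0,0,0,0],
   [0,0,-1,-2,-1,-2,-2,-1],
   [0,0,-1,-2,-1,-2,-1,-1],
   [0,0,-1,-2,-1,-2,-1,0],
   [0,0,-1,-2,-1,-1,-1,-1],
   [0,0,-1,-2,-1,-1,-1,0],
   [0,0,-1,-2,-1,-1,0,0],
   [0,0,-1,-1,-1,-1,-1,-1],
   [0,0,-1,-1,-1,-1,-1,0],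
   [0,0,-1,-1,-1,-1,0,0],
   [0,0,-1,-1,-1,0,0,0],
   [0,0,-1,-1,0,-1,-1,-1],
   [0,0,-1,-1,0,-1,-1,0],
   [0,0,-1,-1,0,-1,0,0],
   [0,0,-1,-1,0,0,0,0],
   [0,0,-1,0,0,0,0,0]]

def rlE7_2 : List (List ℤ) :=
  [[0,0,0,-1,-1,-1,-1,-1],
   [0,0,0,-1,-1,-1,-1,0],
   [0,0,0,-1,-1,-1,0,0],
   [0,0,0,-1,-1,0,0,0],
   [0,0,0,-1,0,-1,-1,-1],
   [0,0,0,-1,0,-1,-1,0],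
   [0,0,0,-1,0,-1,0,0],
   [0,0,0,-1,0,0,0,0],
   [0,0,0,0,-1,0,0,0],
   [0,0,0,0,0,-1,-1,-1],
   [0,0,0,0,0,-1,-1,0],
   [0,0,0,0,0,-1,0,0],
   [0,0,0,0,0,0,-1,-1],
   [0,0,0,0,0,0,-1,0],
   [0,0,0,0,0,0,0,-1],
   [0,0,0,0,0,0,0,1],
   [0,0,0,0,0,0,1,0],
   [0,0,0,0,0,0,1,1],
   [0,0,0,0,0,1,0,0],
   [0,0,0,0,0,1,1,0],
   [0,0,0,0,0,1,1,1],
   [0,0,0,0,1,0,0,0],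
   [0,0,0,1,0,0,0,0],
   [0,0,0,1,0,1,0,0]]

def rlE7_3 : List (List ℤ) :=
  [[0,0,0,1,0,1,1,0],
   [0,0,0,1,0,1,1,1],
   [0,0,0,1,1,0,0,0],
   [0,0,0,1,1,1,0,0],
   [0,0,0,1,1,1,1,0],
   [0,0,0,1,1,1,1,1],
   [0,0,1,0,0,0,0,0],
   [0,0,1,1,0,0,0,0],
   [0,0,1,1,0,1,0,0],
   [0,0,1,1,0,1,1,0],
   [0,0,1,1,0,1,1,1],
   [0,0,1,1,1,0,0,0],
   [0,0,1,1,1,1,0,0],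
   [0,0,1,1,1,1,1,0],
   [0,0,1,1,1,1,1,1],
   [0,0,1,2,1,1,0,0],
   [0,0,1,2,1,1,1,0],
   [0,0,1,2,1,1,1,1],
   [0,0,1,2,1,2,1,0],
   [0,0,1,2,1,2,1,1],
   [0,0,1,2,1,2,2,1],
   [0,1,0,0,0,0,0,0],
   [0,1,1,0,0,0,0,0],
   [0,1,1,1,0,0,0,0]]

def rlE7_4 : List (List ℤ) :=
  [[0,1,1,1,0,1,0,0],
   [0,1,1,1,0,1,1,0],
   [0,1,1,1,0,1,1,1],
   [0,1,1,1,1,0,0,0],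
   [0,1,1,1,1,1,0,0],
   [0,1,1,1,1,1,1,0],
   [0,1,1,1,1,1,1,1],
   [0,1,1,2,1,1,0,0],
   [0,1,1,2,1,1,1,0],
   [0,1,1,2,1,1,1,1],
   [0,1,1,2,1,2,1,0],
   [0,1,1,2,1,2,1,1],
   [0,1,1,2,1,2,2,1],
   [0,1,2,2,1,1,0,0],
   [0,1,2,2,1,1,1,0],
   [0,1,2,2,1,1,1,1],
   [0,1,2,2,1,2,1,0],
   [0,1,2,2,1,2,1,1],
   [0,1,2,2,1,2,2,1],
   [0,1,2,3,1,2,1,0],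
   [0,1,2,3,1,2,1,1],
   [0,1,2,3,1,2,2,1],
   [0,1,2,3,1,3,2,1],
   [0,1,2,3,2,2,1,0]]

def rlE7_5 : List (List ℤ) :=
  [[0,1,2,3,2,2,1,1],
   [0,1,2,3,2,2,2,1],
   [0,1,2,3,2,3,2,1],
   [0,1,2,4,2,3,2,1],
   [0,1,3,4,2,3,2,1],
   [0,2,3,4,2,3,2,1]]

def rootListE7 : List (List ℤ) :=
  rlE7_0 ++ rlE7_1 ++ rlE7_2 ++ rlE7_3 ++ rlE7_4 ++ rlE7_5

def tbE7_0 : List (List ℕ) :=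
  [[1,0,0,0,0,0,0],
   [0,2,1,1,1,1,1],
   [2,1,3,2,2,2,2],
   [3,3,2,7,4,3,3],
   [4,4,4,8,3,5,4],
   [5,5,5,9,5,4,6],
   [6,6,6,10,6,6,5],
   [7,7,7,3,8,7,7],
   [8,8,11,4,7,9,8],
   [9,9,12,5,9,8,10],
   [10,10,13,6,10,10,9],
   [11,17,8,11,11,12,11],
   [12,18,9,12,14,11,13],
   [13,19,10,13,15,13,12],
   [14,20,14,14,12,14,15],
   [15,21,15,15,13,16,14],
   [16,22,16,16,16,15,16],
   [33,11,17,17,17,18,17],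
   [34,12,18,18,20,17,19],
   [35,13,19,19,21,19,18],
   [36,14,23,20,18,20,21],
   [37,15,24,21,19,22,20],
   [38,16,25,22,22,21,22],
   [39,23,20,27,23,23,24]]

def tbE7_1 : List (List ℕ) :=
  [[40,24,21,28,24,25,23],
   [41,25,22,29,26,24,25],
   [42,26,26,30,25,26,26],
   [43,27,27,23,27,27,28],
   [44,28,28,24,28,29,27],
   [45,29,29,25,30,28,29],
   [46,30,31,26,29,30,30],
   [47,32,30,31,31,31,31],
   [93,31,32,32,32,32,32],
   [17,33,33,33,33,34,33],
   [18,34,34,34,36,33,35],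
   [19,35,35,35,37,35,34],
   [20,36,39,36,34,36,37],
   [21,37,40,37,35,38,36],
   [22,38,41,38,38,37,38],
   [23,48,36,43,39,39,40],
   [24,49,37,44,40,41,39],
   [25,50,38,45,42,40,41],
   [26,51,42,46,41,42,42],
   [27,52,43,39,43,43,44],
   [28,53,44,40,44,45,43],
   [29,54,45,41,46,44,45],
   [30,55,47,42,45,46,46],
   [31,78,46,47,47,47,47]]

def tbE7_2 : List (List ℕ) :=
  [[48,39,48,52,48,48,49],
   [49,40,49,53,49,50,48],
   [50,41,50,54,51,49,50],
   [51,42,56,55,50,51,51],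
   [52,43,57,48,52,52,53],
   [53,44,58,49,53,54,52],
   [54,45,59,50,55,53,54],
   [55,46,70,51,54,55,55],
   [56,56,51,69,56,56,56],
   [57,57,52,57,60,57,58],
   [58,58,53,58,61,59,57],
   [59,59,54,59,66,58,59],
   [60,60,60,60,57,62,61],
   [61,61,61,61,58,64,60],
   [62,62,62,62,62,60,63],
   [63,63,63,63,63,65,62],
   [64,64,64,64,67,61,65],
   [65,65,65,65,68,63,64],
   [66,66,71,66,59,67,66],
   [67,67,72,67,64,66,68],
   [68,68,73,68,65,68,67],
   [69,69,74,56,69,69,69],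
   [70,79,55,74,71,70,70],
   [71,80,66,75,70,72,71]]

def tbE7_3 : List (List ℕ) :=
  [[72,81,67,76,72,71,73],
   [73,82,68,77,73,73,72],
   [74,83,69,70,75,74,74],
   [75,84,75,71,74,76,75],
   [76,85,76,72,76,75,77],
   [77,86,77,73,77,77,76],
   [94,47,79,78,78,78,78],
   [95,70,78,83,80,79,79],
   [96,71,80,84,79,81,80],
   [97,72,81,85,81,80,82],
   [98,73,82,86,82,82,81],
   [99,74,83,79,84,83,83],
   [100,75,87,80,83,85,84],
   [101,76,88,81,85,84,86],
   [102,77,89,82,86,86,85],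
   [103,87,84,87,87,88,87],
   [104,88,85,88,90,87,89],
   [105,89,86,89,91,89,88],
   [106,90,90,90,88,90,91],
   [107,91,91,91,89,92,90],
   [108,92,92,92,92,91,92],
   [32,94,93,93,93,93,93],
   [78,93,95,94,94,94,94],
   [79,95,94,99,96,95,95]]

def tbE7_4 : List (List ℕ) :=
  [[80,96,96,100,95,97,96],
   [81,97,97,101,97,96,98],
   [82,98,98,102,98,98,97],
   [83,99,99,95,100,99,99],
   [84,100,103,96,99,101,100],
   [85,101,104,97,101,100,102],
   [86,102,105,98,102,102,101],
   [87,109,100,103,103,104,103],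
   [88,110,101,104,106,103,105],
   [89,111,102,105,107,105,104],
   [90,112,106,106,104,106,107],
   [91,113,107,107,105,108,106],
   [92,114,108,108,108,107,108],
   [109,103,109,109,109,110,109],
   [110,104,110,110,112,109,111],
   [111,105,111,111,113,111,110],
   [112,106,115,112,110,112,113],
   [113,107,116,113,111,114,112],
   [114,108,117,114,114,113,114],
   [115,115,112,119,115,115,116],
   [116,116,113,120,116,117,115],
   [117,117,114,121,118,116,117],
   [118,118,118,122,117,118,118],
   [119,119,119,115,119,119,120]]

def tbE7_5 : List (List ℕ) :=
  [[120,120,120,116,120,121,119],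
   [121,121,121,117,122,120,121],
   [122,122,123,118,121,122,122],
   [123,124,122,123,123,123,123],
   [125,123,124,124,124,124,124],
   [124,125,125,125,125,125,125]]

def tblE7 : List (List ℕ) :=
  tbE7_0 ++ tbE7_1 ++ tbE7_2 ++ tbE7_3 ++ tbE7_4 ++ tbE7_5

def etblE7 : List ℕ := [93,78,70,69,66,64,63]

def rlE8_0 : List (List ℤ) :=
  [[0,-2,-3,-4,-5,-6,-3,-4,-2],
   [0,-1,-3,-4,-5,-6,-3,-4,-2],
   [0,-1,-2,-4,-5,-6,-3,-4,-2],
   [0,-1,-2,-3,-5,-6,-3,-4,-2],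
   [0,-1,-2,-3,-4,-6,-3,-4,-2],
   [0,-1,-2,-3,-4,-5,-3,-4,-2],
   [0,-1,-2,-3,-4,-5,-3,-3,-2],
   [0,-1,-2,-3,-4,-5,-3,-3,-1],
   [0,-1,-2,-3,-4,-5,-2,-4,-2],
   [0,-1,-2,-3,-4,-5,-2,-3,-2],
   [0,-1,-2,-3,-4,-5,-2,-3,-1],
   [0,-1,-2,-3,-4,-4,-2,-3,-2],
   [0,-1,-2,-3,-4,-4,-2,-3,-1],
   [0,-1,-2,-3,-4,-4,-2,-2,-1],
   [0,-1,-2,-3,-3,-4,-2,-3,-2],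
   [0,-1,-2,-3,-3,-4,-2,-3,-1],
   [0,-1,-2,-3,-3,-4,-2,-2,-1],
   [0,-1,-2,-3,-3,-3,-2,-2,-1],
   [0,-1,-2,-3,-3,-3,-1,-2,-1],
   [0,-1,-2,-2,-3,-4,-2,-3,-2],
   [0,-1,-2,-2,-3,-4,-2,-3,-1],
   [0,-1,-2,-2,-3,-4,-2,-2,-1],
   [0,-1,-2,-2,-3,-3,-2,-2,-1],
   [0,-1,-2,-2,-3,-3,-1,-2,-1]]

def rlE8_1 : List (List ℤ) :=
  [[0,-1,-2,-2,-2,-3,-2,-2,-1],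
   [0,-1,-2,-2,-2,-3,-1,-2,-1],
   [0,-1,-2,-2,-2,-2,-1,-2,-1],
   [0,-1,-2,-2,-2,-2,-1,-1,-1],
   [0,-1,-2,-2,-2,-2,-1,-1,0],
   [0,-1,-1,-2,-3,-4,-2,-3,-2],
   [0,-1,-1,-2,-3,-4,-2,-3,-1],
   [0,-1,-1,-2,-3,-4,-2,-2,-1],
   [0,-1,-1,-2,-3,-3,-2,-2,-1],
   [0,-1,-1,-2,-3,-3,-1,-2,-1],
   [0,-1,-1,-2,-2,-3,-2,-2,-1],
   [0,-1,-1,-2,-2,-3,-1,-2,-1],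
   [0,-1,-1,-2,-2,-2,-1,-2,-1],
   [0,-1,-1,-2,-2,-2,-1,-1,-1],
   [0,-1,-1,-2,-2,-2,-1,-1,0],
   [0,-1,-1,-1,-2,-3,-2,-2,-1],
   [0,-1,-1,-1,-2,-3,-1,-2,-1],
   [0,-1,-1,-1,-2,-2,-1,-2,-1],
   [0,-1,-1,-1,-2,-2,-1,-1,-1],
   [0,-1,-1,-1,-2,-2,-1,-1,0],
   [0,-1,-1,-1,-1,-2,-1,-2,-1],
   [0,-1,-1,-1,-1,-2,-1,-1,-1],
   [0,-1,-1,-1,-1,-2,-1,-1,0],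
   [0,-1,-1,-1,-1,-1,-1,-1,-1]]

def rlE8_2 : List (List ℤ) :=
  [[0,-1,-1,-1,-1,-1,-1,-1,0],
   [0,-1,-1,-1,-1,-1,-1,0,0],
   [0,-1,-1,-1,-1,-1,0,-1,-1],
   [0,-1,-1,-1,-1,-1,0,-1,0],
   [0,-1,-1,-1,-1,-1,0,0,0],
   [0,-1,-1,-1,-1,0,0,0,0],
   [0,-1,-1,-1,0,0,0,0,0],
   [0,-1,-1,0,0,0,0,0,0],
   [0,-1,0,0,0,0,0,0,0],
   [0,0,-1,-2,-3,-4,-2,-3,-2],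
   [0,0,-1,-2,-3,-4,-2,-3,-1],
   [0,0,-1,-2,-3,-4,-2,-2,-1],
   [0,0,-1,-2,-3,-3,-2,-2,-1],
   [0,0,-1,-2,-3,-3,-1,-2,-1],
   [0,0,-1,-2,-2,-3,-2,-2,-1],
   [0,0,-1,-2,-2,-3,-1,-2,-1],
   [0,0,-1,-2,-2,-2,-1,-2,-1],
   [0,0,-1,-2,-2,-2,-1,-1,-1],
   [0,0,-1,-2,-2,-2,-1,-1,0],
   [0,0,-1,-1,-2,-3,-2,-2,-1],
   [0,0,-1,-1,-2,-3,-1,-2,-1],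
   [0,0,-1,-1,-2,-2,-1,-2,-1],
   [0,0,-1,-1,-2,-2,-1,-1,-1],
   [0,0,-1,-1,-2,-2,-1,-1,0]]

def rlE8_3 : List (List ℤ) :=
  [[0,0,-1,-1,-1,-2,-1,-2,-1],
   [0,0,-1,-1,-1,-2,-1,-1,-1],
   [0,0,-1,-1,-1,-2,-1,-1,0],
   [0,0,-1,-1,-1,-1,-1,-1,-1],
   [0,0,-1,-1,-1,-1,-1,-1,0],
   [0,0,-1,-1,-1,-1,-1,0,0],
   [0,0,-1,-1,-1,-1,0,-1,-1],
   [0,0,-1,-1,-1,-1,0,-1,0],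
   [0,0,-1,-1,-1,-1,0,0,0],
   [0,0,-1,-1,-1,0,0,0,0],
   [0,0,-1,-1,0,0,0,0,0],
   [0,0,-1,0,0,0,0,0,0],
   [0,0,0,-1,-2,-3,-2,-2,-1],
   [0,0,0,-1,-2,-3,-1,-2,-1],
   [0,0,0,-1,-2,-2,-1,-2,-1],
   [0,0,0,-1,-2,-2,-1,-1,-1],
   [0,0,0,-1,-2,-2,-1,-1,0],
   [0,0,0,-1,-1,-2,-1,-2,-1],
   [0,0,0,-1,-1,-2,-1,-1,-1],
   [0,0,0,-1,-1,-2,-1,-1,0],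
   [0,0,0,-1,-1,-1,-1,-1,-1],
   [0,0,0,-1,-1,-1,-1,-1,0],
   [0,0,0,-1,-1,-1,-1,0,0],
   [0,0,0,-1,-1,-1,0,-1,-1]]

def rlE8_4 : List (List ℤ) :=
  [[0,0,0,-1,-1,-1,0,-1,0],
   [0,0,0,-1,-1,-1,0,0,0],
   [0,0,0,-1,-1,0,0,0,0],
   [0,0,0,-1,0,0,0,0,0],
   [0,0,0,0,-1,-2,-1,-2,-1],
   [0,0,0,0,-1,-2,-1,-1,-1],
   [0,0,0,0,-1,-2,-1,-1,0],
   [0,0,0,0,-1,-1,-1,-1,-1],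
   [0,0,0,0,-1,-1,-1,-1,0],
   [0,0,0,0,-1,-1,-1,0,0],
   [0,0,0,0,-1,-1,0,-1,-1],
   [0,0,0,0,-1,-1,0,-1,0],
   [0,0,0,0,-1,-1,0,0,0],
   [0,0,0,0,-1,0,0,0,0],
   [0,0,0,0,0,-1,-1,-1,-1],
   [0,0,0,0,0,-1,-1,-1,0],
   [0,0,0,0,0,-1,-1,0,0],
   [0,0,0,0,0,-1,0,-1,-1],
   [0,0,0,0,0,-1,0,-1,0],
   [0,0,0,0,0,-1,0,0,0],
   [0,0,0,0,0,0,-1,0,0],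
   [0,0,0,0,0,0,0,-1,-1],
   [0,0,0,0,0,0,0,-1,0],
   [0,0,0,0,0,0,0,0,-1]]

def rlE8_5 : List (List ℤ) :=
  [[0,0,0,0,0,0,0,0,1],
   [0,0,0,0,0,0,0,1,0],
   [0,0,0,0,0,0,0,1,1],
   [0,0,0,0,0,0,1,0,0],
   [0,0,0,0,0,1,0,0,0],
   [0,0,0,0,0,1,0,1,0],
   [0,0,0,0,0,1,0,1,1],
   [0,0,0,0,0,1,1,0,0],
   [0,0,0,0,0,1,1,1,0],
   [0,0,0,0,0,1,1,1,1],
   [0,0,0,0,1,0,0,0,0],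
   [0,0,0,0,1,1,0,0,0],
   [0,0,0,0,1,1,0,1,0],
   [0,0,0,0,1,1,0,1,1],
   [0,0,0,0,1,1,1,0,0],
   [0,0,0,0,1,1,1,1,0],
   [0,0,0,0,1,1,1,1,1],
   [0,0,0,0,1,2,1,1,0],
   [0,0,0,0,1,2,1,1,1],
   [0,0,0,0,1,2,1,2,1],
   [0,0,0,1,0,0,0,0,0],
   [0,0,0,1,1,0,0,0,0],
   [0,0,0,1,1,1,0,0,0],
   [0,0,0,1,1,1,0,1,0]]

def rlE8_6 : List (List ℤ) :=
  [[0,0,0,1,1,1,0,1,1],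
   [0,0,0,1,1,1,1,0,0],
   [0,0,0,1,1,1,1,1,0],
   [0,0,0,1,1,1,1,1,1],
   [0,0,0,1,1,2,1,1,0],
   [0,0,0,1,1,2,1,1,1],
   [0,0,0,1,1,2,1,2,1],
   [0,0,0,1,2,2,1,1,0],
   [0,0,0,1,2,2,1,1,1],
   [0,0,0,1,2,2,1,2,1],
   [0,0,0,1,2,3,1,2,1],
   [0,0,0,1,2,3,2,2,1],
   [0,0,1,0,0,0,0,0,0],
   [0,0,1,1,0,0,0,0,0],
   [0,0,1,1,1,0,0,0,0],
   [0,0,1,1,1,1,0,0,0],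
   [0,0,1,1,1,1,0,1,0],
   [0,0,1,1,1,1,0,1,1],
   [0,0,1,1,1,1,1,0,0],
   [0,0,1,1,1,1,1,1,0],
   [0,0,1,1,1,1,1,1,1],
   [0,0,1,1,1,2,1,1,0],
   [0,0,1,1,1,2,1,1,1],
   [0,0,1,1,1,2,1,2,1]]

def rlE8_7 : List (List ℤ) :=
  [[0,0,1,1,2,2,1,1,0],
   [0,0,1,1,2,2,1,1,1],
   [0,0,1,1,2,2,1,2,1],
   [0,0,1,1,2,3,1,2,1],
   [0,0,1,1,2,3,2,2,1],
   [0,0,1,2,2,2,1,1,0],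
   [0,0,1,2,2,2,1,1,1],
   [0,0,1,2,2,2,1,2,1],
   [0,0,1,2,2,3,1,2,1],
   [0,0,1,2,2,3,2,2,1],
   [0,0,1,2,3,3,1,2,1],
   [0,0,1,2,3,3,2,2,1],
   [0,0,1,2,3,4,2,2,1],
   [0,0,1,2,3,4,2,3,1],
   [0,0,1,2,3,4,2,3,2],
   [0,1,0,0,0,0,0,0,0],
   [0,1,1,0,0,0,0,0,0],
   [0,1,1,1,0,0,0,0,0],
   [0,1,1,1,1,0,0,0,0],
   [0,1,1,1,1,1,0,0,0],
   [0,1,1,1,1,1,0,1,0],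
   [0,1,1,1,1,1,0,1,1],
   [0,1,1,1,1,1,1,0,0],
   [0,1,1,1,1,1,1,1,0]]

def rlE8_8 : List (List ℤ) :=
  [[0,1,1,1,1,1,1,1,1],
   [0,1,1,1,1,2,1,1,0],
   [0,1,1,1,1,2,1,1,1],
   [0,1,1,1,1,2,1,2,1],
   [0,1,1,1,2,2,1,1,0],
   [0,1,1,1,2,2,1,1,1],
   [0,1,1,1,2,2,1,2,1],
   [0,1,1,1,2,3,1,2,1],
   [0,1,1,1,2,3,2,2,1],
   [0,1,1,2,2,2,1,1,0],
   [0,1,1,2,2,2,1,1,1],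
   [0,1,1,2,2,2,1,2,1],
   [0,1,1,2,2,3,1,2,1],
   [0,1,1,2,2,3,2,2,1],
   [0,1,1,2,3,3,1,2,1],
   [0,1,1,2,3,3,2,2,1],
   [0,1,1,2,3,4,2,2,1],
   [0,1,1,2,3,4,2,3,1],
   [0,1,1,2,3,4,2,3,2],
   [0,1,2,2,2,2,1,1,0],
   [0,1,2,2,2,2,1,1,1],
   [0,1,2,2,2,2,1,2,1],
   [0,1,2,2,2,3,1,2,1],
   [0,1,2,2,2,3,2,2,1]]

def rlE8_9 : List (List ℤ) :=
  [[0,1,2,2,3,3,1,2,1],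
   [0,1,2,2,3,3,2,2,1],
   [0,1,2,2,3,4,2,2,1],
   [0,1,2,2,3,4,2,3,1],
   [0,1,2,2,3,4,2,3,2],
   [0,1,2,3,3,3,1,2,1],
   [0,1,2,3,3,3,2,2,1],
   [0,1,2,3,3,4,2,2,1],
   [0,1,2,3,3,4,2,3,1],
   [0,1,2,3,3,4,2,3,2],
   [0,1,2,3,4,4,2,2,1],
   [0,1,2,3,4,4,2,3,1],
   [0,1,2,3,4,4,2,3,2],
   [0,1,2,3,4,5,2,3,1],
   [0,1,2,3,4,5,2,3,2],
   [0,1,2,3,4,5,2,4,2],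
   [0,1,2,3,4,5,3,3,1],
   [0,1,2,3,4,5,3,3,2],
   [0,1,2,3,4,5,3,4,2],
   [0,1,2,3,4,6,3,4,2],
   [0,1,2,3,5,6,3,4,2],
   [0,1,2,4,5,6,3,4,2],
   [0,1,3,4,5,6,3,4,2],
   [0,2,3,4,5,6,3,4,2]]

def rootListE8 : List (List ℤ) :=
  rlE8_0 ++ rlE8_1 ++ rlE8_2 ++ rlE8_3 ++ rlE8_4 ++ rlE8_5 ++ rlE8_6 ++ rlE8_7 ++ rlE8_8 ++ rlE8_9

def tbE8_0 : List (List ℕ) :=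
  [[1,0,0,0,0,0,0,0],
   [0,2,1,1,1,1,1,1],
   [2,1,3,2,2,2,2,2],
   [3,3,2,4,3,3,3,3],
   [4,4,4,3,5,4,4,4],
   [5,5,5,5,4,8,6,5],
   [6,6,6,6,6,9,5,7],
   [7,7,7,7,7,10,7,6],
   [8,8,8,8,8,5,9,8],
   [9,9,9,9,11,6,8,10],
   [10,10,10,10,12,7,10,9],
   [11,11,11,14,9,11,11,12],
   [12,12,12,15,10,12,13,11],
   [13,13,13,16,13,13,12,13],
   [14,14,19,11,14,14,14,15],
   [15,15,20,12,15,15,16,14],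
   [16,16,21,13,17,16,15,16],
   [17,17,22,17,16,18,17,17],
   [18,18,23,18,18,17,18,18],
   [19,29,14,19,19,19,19,20],
   [20,30,15,20,20,20,21,19],
   [21,31,16,21,22,21,20,21],
   [22,32,17,24,21,23,22,22],
   [23,33,18,25,23,22,23,23]]

def tbE8_1 : List (List ℕ) :=
  [[24,34,24,22,24,25,24,24],
   [25,35,25,23,26,24,25,25],
   [26,36,26,26,25,26,27,26],
   [27,37,27,27,27,27,26,28],
   [28,38,28,28,28,28,28,27],
   [57,19,29,29,29,29,29,30],
   [58,20,30,30,30,30,31,29],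
   [59,21,31,31,32,31,30,31],
   [60,22,32,34,31,33,32,32],
   [61,23,33,35,33,32,33,33],
   [62,24,39,32,34,35,34,34],
   [63,25,40,33,36,34,35,35],
   [64,26,41,36,35,36,37,36],
   [65,27,42,37,37,37,36,38],
   [66,28,43,38,38,38,38,37],
   [67,39,34,39,39,40,39,39],
   [68,40,35,40,41,39,40,40],
   [69,41,36,44,40,41,42,41],
   [70,42,37,45,42,42,41,43],
   [71,43,38,46,43,43,43,42],
   [72,44,44,41,44,44,45,44],
   [73,45,45,42,47,45,44,46],
   [74,46,46,43,48,46,46,45],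
   [75,47,47,47,45,50,47,48]]

def tbE8_2 : List (List ℕ) :=
  [[76,48,48,48,46,51,49,47],
   [77,49,49,49,49,52,48,49],
   [78,50,50,50,50,47,50,51],
   [79,51,51,51,51,48,52,50],
   [80,52,52,52,53,49,51,52],
   [81,53,53,54,52,53,53,53],
   [82,54,55,53,54,54,54,54],
   [83,56,54,55,55,55,55,55],
   [183,55,56,56,56,56,56,56],
   [29,57,57,57,57,57,57,58],
   [30,58,58,58,58,58,59,57],
   [31,59,59,59,60,59,58,59],
   [32,60,60,62,59,61,60,60],
   [33,61,61,63,61,60,61,61],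
   [34,62,67,60,62,63,62,62],
   [35,63,68,61,64,62,63,63],
   [36,64,69,64,63,64,65,64],
   [37,65,70,65,65,65,64,66],
   [38,66,71,66,66,66,66,65],
   [39,84,62,67,67,68,67,67],
   [40,85,63,68,69,67,68,68],
   [41,86,64,72,68,69,70,69],
   [42,87,65,73,70,70,69,71],
   [43,88,66,74,71,71,71,70]]

def tbE8_3 : List (List ℕ) :=
  [[44,89,72,69,72,72,73,72],
   [45,90,73,70,75,73,72,74],
   [46,91,74,71,76,74,74,73],
   [47,92,75,75,73,78,75,76],
   [48,93,76,76,74,79,77,75],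
   [49,94,77,77,77,80,76,77],
   [50,95,78,78,78,75,78,79],
   [51,96,79,79,79,76,80,78],
   [52,97,80,80,81,77,79,80],
   [53,98,81,82,80,81,81,81],
   [54,99,83,81,82,82,82,82],
   [55,156,82,83,83,83,83,83],
   [84,67,84,84,84,85,84,84],
   [85,68,85,85,86,84,85,85],
   [86,69,86,89,85,86,87,86],
   [87,70,87,90,87,87,86,88],
   [88,71,88,91,88,88,88,87],
   [89,72,100,86,89,89,90,89],
   [90,73,101,87,92,90,89,91],
   [91,74,102,88,93,91,91,90],
   [92,75,103,92,90,95,92,93],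
   [93,76,104,93,91,96,94,92],
   [94,77,105,94,94,97,93,94],
   [95,78,106,95,95,92,95,96]]

def tbE8_4 : List (List ℕ) :=
  [[96,79,107,96,96,93,97,95],
   [97,80,108,97,98,94,96,97],
   [98,81,109,99,97,98,98,98],
   [99,82,140,98,99,99,99,99],
   [100,100,89,100,100,100,101,100],
   [101,101,90,101,103,101,100,102],
   [102,102,91,102,104,102,102,101],
   [103,103,92,110,101,106,103,104],
   [104,104,93,111,102,107,105,103],
   [105,105,94,112,105,108,104,105],
   [106,106,95,113,106,103,106,107],
   [107,107,96,114,107,104,108,106],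
   [108,108,97,115,109,105,107,108],
   [109,109,98,130,108,109,109,109],
   [110,110,110,103,110,113,110,111],
   [111,111,111,104,111,114,112,110],
   [112,112,112,105,116,115,111,112],
   [113,113,113,106,117,110,113,114],
   [114,114,114,107,118,111,115,113],
   [115,115,115,108,124,112,114,115],
   [116,116,116,116,112,123,116,116],
   [117,117,117,117,113,117,119,118],
   [118,118,118,118,114,118,121,117],
   [119,119,119,119,119,119,117,120]]

def tbE8_5 : List (List ℕ) :=
  [[120,120,120,120,120,120,122,119],
   [121,121,121,121,125,121,118,122],
   [122,122,122,122,126,122,120,121],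
   [123,123,123,123,127,116,123,123],
   [124,124,124,131,115,127,125,124],
   [125,125,125,132,121,128,124,126],
   [126,126,126,133,122,129,126,125],
   [127,127,127,134,123,124,128,127],
   [128,128,128,135,128,125,127,129],
   [129,129,129,136,129,126,129,128],
   [130,130,141,109,131,130,130,130],
   [131,131,142,124,130,134,132,131],
   [132,132,143,125,132,135,131,133],
   [133,133,144,126,133,136,133,132],
   [134,134,145,127,134,131,135,134],
   [135,135,146,128,137,132,134,136],
   [136,136,147,129,138,133,136,135],
   [137,137,148,137,135,137,137,138],
   [138,138,149,138,136,138,139,137],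
   [139,139,150,139,139,139,138,139],
   [140,157,99,141,140,140,140,140],
   [141,158,130,140,142,141,141,141],
   [142,159,131,142,141,145,143,142],
   [143,160,132,143,143,146,142,144]]

def tbE8_6 : List (List ℕ) :=
  [[144,161,133,144,144,147,144,143],
   [145,162,134,145,145,142,146,145],
   [146,163,135,146,148,143,145,147],
   [147,164,136,147,149,144,147,146],
   [148,165,137,151,146,148,148,149],
   [149,166,138,152,147,149,150,148],
   [150,167,139,153,150,150,149,150],
   [151,168,151,148,151,151,151,152],
   [152,169,152,149,152,152,153,151],
   [153,170,153,150,154,153,152,153],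
   [154,171,154,154,153,155,154,154],
   [155,172,155,155,155,154,155,155],
   [184,83,157,156,156,156,156,156],
   [185,140,156,158,157,157,157,157],
   [186,141,158,157,159,158,158,158],
   [187,142,159,159,158,162,160,159],
   [188,143,160,160,160,163,159,161],
   [189,144,161,161,161,164,161,160],
   [190,145,162,162,162,159,163,162],
   [191,146,163,163,165,160,162,164],
   [192,147,164,164,166,161,164,163],
   [193,148,165,168,163,165,165,166],
   [194,149,166,169,164,166,167,165],
   [195,150,167,170,167,167,166,167]]

def tbE8_7 : List (List ℕ) :=
  [[196,151,173,165,168,168,168,169],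
   [197,152,174,166,169,169,170,168],
   [198,153,175,167,171,170,169,170],
   [199,154,176,171,170,172,171,171],
   [200,155,177,172,172,171,172,172],
   [201,173,168,173,173,173,173,174],
   [202,174,169,174,174,174,175,173],
   [203,175,170,175,176,175,174,175],
   [204,176,171,178,175,177,176,176],
   [205,177,172,179,177,176,177,177],
   [206,178,178,176,178,179,178,178],
   [207,179,179,177,180,178,179,179],
   [208,180,180,180,179,180,181,180],
   [209,181,181,181,181,181,180,182],
   [210,182,182,182,182,182,182,181],
   [56,184,183,183,183,183,183,183],
   [156,183,185,184,184,184,184,184],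
   [157,185,184,186,185,185,185,185],
   [158,186,186,185,187,186,186,186],
   [159,187,187,187,186,190,188,187],
   [160,188,188,188,188,191,187,189],
   [161,189,189,189,189,192,189,188],
   [162,190,190,190,190,187,191,190],
   [163,191,191,191,193,188,190,192]]

def tbE8_8 : List (List ℕ) :=
  [[164,192,192,192,194,189,192,191],
   [165,193,193,196,191,193,193,194],
   [166,194,194,197,192,194,195,193],
   [167,195,195,198,195,195,194,195],
   [168,196,201,193,196,196,196,197],
   [169,197,202,194,197,197,198,196],
   [170,198,203,195,199,198,197,198],
   [171,199,204,199,198,200,199,199],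
   [172,200,205,200,200,199,200,200],
   [173,211,196,201,201,201,201,202],
   [174,212,197,202,202,202,203,201],
   [175,213,198,203,204,203,202,203],
   [176,214,199,206,203,205,204,204],
   [177,215,200,207,205,204,205,205],
   [178,216,206,204,206,207,206,206],
   [179,217,207,205,208,206,207,207],
   [180,218,208,208,207,208,209,208],
   [181,219,209,209,209,209,208,210],
   [182,220,210,210,210,210,210,209],
   [211,201,211,211,211,211,211,212],
   [212,202,212,212,212,212,213,211],
   [213,203,213,213,214,213,212,213],
   [214,204,214,216,213,215,214,214],
   [215,205,215,217,215,214,215,215]]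

def tbE8_9 : List (List ℕ) :=
  [[216,206,221,214,216,217,216,216],
   [217,207,222,215,218,216,217,217],
   [218,208,223,218,217,218,219,218],
   [219,209,224,219,219,219,218,220],
   [220,210,225,220,220,220,220,219],
   [221,221,216,221,221,222,221,221],
   [222,222,217,222,223,221,222,222],
   [223,223,218,226,222,223,224,223],
   [224,224,219,227,224,224,223,225],
   [225,225,220,228,225,225,225,224],
   [226,226,226,223,226,226,227,226],
   [227,227,227,224,229,227,226,228],
   [228,228,228,225,230,228,228,227],
   [229,229,229,229,227,232,229,230],
   [230,230,230,230,228,233,231,229],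
   [231,231,231,231,231,234,230,231],
   [232,232,232,232,232,229,232,233],
   [233,233,233,233,233,230,234,232],
   [234,234,234,234,235,231,233,234],
   [235,235,235,236,234,235,235,235],
   [236,236,237,235,236,236,236,236],
   [237,238,236,237,237,237,237,237],
   [239,237,238,238,238,238,238,238],
   [238,239,239,239,239,239,239,239]]

def tblE8 : List (List ℕ) :=
  tbE8_0 ++ tbE8_1 ++ tbE8_2 ++ tbE8_3 ++ tbE8_4 ++ tbE8_5 ++ tbE8_6 ++ tbE8_7 ++ tbE8_8 ++ tbE8_9

def etblE8 : List ℕ := [183,156,140,130,124,123,121,120]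

def rlF4_0 : List (List ℤ) :=
  [[0,-2,-3,-4,-2],
   [0,-1,-3,-4,-2],
   [0,-1,-2,-4,-2],
   [0,-1,-2,-3,-2],
   [0,-1,-2,-3,-1],
   [0,-1,-2,-2,-2],
   [0,-1,-2,-2,-1],
   [0,-1,-2,-2,0],
   [0,-1,-1,-2,-2],
   [0,-1,-1,-2,-1],
   [0,-1,-1,-2,0],
   [0,-1,-1,-1,-1],
   [0,-1,-1,-1,0],
   [0,-1,-1,0,0],
   [0,-1,0,0,0],
   [0,0,-1,-2,-2],
   [0,0,-1,-2,-1],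
   [0,0,-1,-2,0],
   [0,0,-1,-1,-1],
   [0,0,-1,-1,0],
   [0,0,-1,0,0],
   [0,0,0,-1,-1],
   [0,0,0,-1,0],
   [0,0,0,0,-1]]

def rlF4_1 : List (List ℤ) :=
  [[0,0,0,0,1],
   [0,0,0,1,0],
   [0,0,0,1,1],
   [0,0,1,0,0],
   [0,0,1,1,0],
   [0,0,1,1,1],
   [0,0,1,2,0],
   [0,0,1,2,1],
   [0,0,1,2,2],
   [0,1,0,0,0],
   [0,1,1,0,0],
   [0,1,1,1,0],
   [0,1,1,1,1],
   [0,1,1,2,0],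
   [0,1,1,2,1],
   [0,1,1,2,2],
   [0,1,2,2,0],
   [0,1,2,2,1],
   [0,1,2,2,2],
   [0,1,2,3,1],
   [0,1,2,3,2],
   [0,1,2,4,2],
   [0,1,3,4,2],
   [0,2,3,4,2]]

def rootListF4 : List (List ℤ) :=
  rlF4_0 ++ rlF4_1

def tbF4_0 : List (List ℕ) :=
  [[1,0,0,0],
   [0,2,1,1],
   [2,1,5,2],
   [3,3,3,4],
   [4,4,6,3],
   [5,8,2,7],
   [6,9,4,6],
   [7,10,7,5],
   [15,5,8,10],
   [16,6,11,9],
   [17,7,13,8],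
   [18,11,9,12],
   [19,12,12,11],
   [20,14,10,13],
   [33,13,14,14],
   [8,15,15,17],
   [9,16,18,16],
   [10,17,20,15],
   [11,21,16,19],
   [12,22,19,18],
   [13,27,17,20],
   [21,18,23,22],
   [22,19,25,21],
   [23,23,21,24]]

def tbF4_1 : List (List ℕ) :=
  [[24,24,26,23],
   [25,28,22,26],
   [26,29,24,25],
   [34,20,30,27],
   [35,25,28,29],
   [36,26,31,28],
   [37,30,27,32],
   [38,31,29,31],
   [39,32,32,30],
   [14,34,33,33],
   [27,33,37,34],
   [28,35,35,36],
   [29,36,38,35],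
   [30,40,34,39],
   [31,41,36,38],
   [32,42,39,37],
   [40,37,40,42],
   [41,38,43,41],
   [42,39,45,40],
   [43,43,41,44],
   [44,44,44,43],
   [45,46,42,45],
   [47,45,46,46],
   [46,47,47,47]]

def tblF4 : List (List ℕ) :=
  tbF4_0 ++ tbF4_1

def etblF4 : List ℕ := [33,27,25,24]

def rlE62_0 : List (List ℤ) :=
  [[0,-2,-4,-3,-2],
   [0,-2,-4,-3,-1],
   [0,-2,-4,-2,-1],
   [0,-2,-3,-2,-1],
   [0,-2,-2,-2,-1],
   [0,-2,-2,-1,-1],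
   [0,-2,-2,-1,0],
   [0,-1,-3,-2,-1],
   [0,-1,-2,-2,-1],
   [0,-1,-2,-1,-1],
   [0,-1,-2,-1,0],
   [0,-1,-1,-1,-1],
   [0,-1,-1,-1,0],
   [0,-1,-1,0,0],
   [0,-1,0,0,0],
   [0,0,-2,-2,-1],
   [0,0,-2,-1,-1],
   [0,0,-2,-1,0],
   [0,0,-1,-1,-1],
   [0,0,-1,-1,0],
   [0,0,-1,0,0],
   [0,0,0,-1,-1],
   [0,0,0,-1,0],
   [0,0,0,0,-1]]

def rlE62_1 : List (List ℤ) :=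
  [[0,0,0,0,1],
   [0,0,0,1,0],
   [0,0,0,1,1],
   [0,0,1,0,0],
   [0,0,1,1,0],
   [0,0,1,1,1],
   [0,0,2,1,0],
   [0,0,2,1,1],
   [0,0,2,2,1],
   [0,1,0,0,0],
   [0,1,1,0,0],
   [0,1,1,1,0],
   [0,1,1,1,1],
   [0,1,2,1,0],
   [0,1,2,1,1],
   [0,1,2,2,1],
   [0,1,3,2,1],
   [0,2,2,1,0],
   [0,2,2,1,1],
   [0,2,2,2,1],
   [0,2,3,2,1],
   [0,2,4,2,1],
   [0,2,4,3,1],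
   [0,2,4,3,2]]

def rootListE62 : List (List ℤ) :=
  rlE62_0 ++ rlE62_1

def tbE62_0 : List (List ℕ) :=
  [[0,0,0,1],
   [1,1,2,0],
   [2,4,1,2],
   [7,3,3,3],
   [15,2,5,4],
   [16,5,4,6],
   [17,6,6,5],
   [3,8,7,7],
   [8,7,9,8],
   [9,11,8,10],
   [10,12,10,9],
   [18,9,11,12],
   [19,10,13,11],
   [20,14,12,13],
   [33,13,14,14],
   [4,15,16,15],
   [5,21,15,17],
   [6,22,17,16],
   [11,18,18,19],
   [12,19,20,18],
   [13,27,19,20],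
   [21,16,23,22],
   [22,17,25,21],
   [23,23,21,24]]

def tbE62_1 : List (List ℕ) :=
  [[24,24,26,23],
   [25,30,22,26],
   [26,31,24,25],
   [34,20,28,27],
   [35,28,27,29],
   [36,29,29,28],
   [41,25,30,31],
   [42,26,32,30],
   [43,32,31,32],
   [14,34,33,33],
   [27,33,35,34],
   [28,37,34,36],
   [29,38,36,35],
   [37,35,37,38],
   [38,36,39,37],
   [39,40,38,39],
   [44,39,40,40],
   [30,41,41,42],
   [31,42,43,41],
   [32,45,42,43],
   [40,44,44,44],
   [45,43,46,45],
   [46,46,45,47],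
   [47,47,47,46]]

def tblE62 : List (List ℕ) :=
  tbE62_0 ++ tbE62_1

def etblE62 : List ℕ := [33,27,25,24]


def rootList : AffCase → List (List ℤ)
  | E6 => rootListE6 | E7 => rootListE7 | E8 => rootListE8 | F4 => rootListF4 | E62 => rootListE62

def tblOf : AffCase → List (List ℕ)
  | E6 => tblE6 | E7 => tblE7 | E8 => tblE8 | F4 => tblF4 | E62 => tblE62

def etbl : AffCase → List ℕ
  | E6 => etblE6 | E7 => etblE7 | E8 => etblE8 | F4 => etblF4 | E62 => etblE62

def nroots : AffCase → ℕ
  | E6 => 72 | E7 => 126 | E8 => 240 | F4 => 48 | E62 => 48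

def vpair (c : AffCase) (i : ℕ) (v : List ℤ) : ℤ :=
  ((List.range (rank c + 1)).map (fun j => cartan c i j * v.getD j 0)).sum

def vref (c : AffCase) (i : ℕ) (v : List ℤ) : List ℤ :=
  (List.range (rank c + 1)).map (fun j => v.getD j 0 - if j = i then vpair c i v else 0)

def evec (c : AffCase) (i : ℕ) : List ℤ :=
  (List.range (rank c + 1)).map (fun j => if j = i then (1:ℤ) else 0)

def g (c : AffCase) (k : ℕ) : List ℤ := (rootList c).getD k []

set_option maxRecDepth 100000 in
set_option maxHeartbeats 4000000 in
lemma rootFacts (c : AffCase) :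
    (∀ i ∈ List.range (rank c), evec c (i+1) = g c ((etbl c).getD i 0) ∧
        (etbl c).getD i 0 < nroots c) ∧
    (∀ k ∈ List.range (nroots c),
      (g c k).length = rank c + 1 ∧ (∃ x ∈ g c k, x ≠ 0) ∧
      ∀ i ∈ List.range (rank c),
        (vref c (i+1) (g c k) = g c (((tblOf c).getD k []).getD i 0) ∧
          ((tblOf c).getD k []).getD i 0 < nroots c) ∧
        ((∀ x ∈ g c k, 0 ≤ x) →
          (∀ x ∈ vref c (i+1) (g c k), 0 ≤ x) ∨ g c k = evec c (i+1))) := by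
  rcases c <;> decide

/-! ### Bridging lemmas -/

def ofVec (v : List ℤ) : ℕ → ℤ := fun j => v.getD j 0

lemma getD_map_range (gg : ℕ → ℤ) (m j : ℕ) :
    ((List.range m).map gg).getD j 0 = if j < m then gg j else 0 := by
  by_cases h : j < m
  · rw [List.getD_eq_getElem _ _ (by simpa using h)]
    simp [h]
  · rw [List.getD_eq_default _ _ (by simpa using Nat.le_of_not_lt h)]
    simp [h]

lemma cartan_zero_right (c : AffCase) {i : ℕ} (hi : 1 ≤ i) : cartan c i 0 = 0 := by
  have h1 : i ≠ 0 := by omega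
  rcases c <;> simp [cartan, adj, h1]

lemma range_succ_insert (n : ℕ) : Finset.range (n + 1) = insert 0 (Finset.Icc 1 n) := by
  ext x; simp [Finset.mem_range, Finset.mem_Icc]; omega

lemma list_sum_range (gg : ℕ → ℤ) (m : ℕ) :
    ((List.range m).map gg).sum = ∑ j ∈ Finset.range m, gg j := by
  induction m with
  | zero => simp
  | succ m ih => rw [List.range_succ, Finset.sum_range_succ, List.map_append, List.sum_append, ih]; simp

lemma pairing_ofVec (c : AffCase) {i : ℕ} (hi : 1 ≤ i) (v : List ℤ) :
    pairing c i (ofVec v) = vpair c i v := by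
  unfold pairing vpair I0 ofVec
  rw [list_sum_range, range_succ_insert, Finset.sum_insert (by simp),
    cartan_zero_right c hi, zero_mul, zero_add]

lemma ofVec_vref (c : AffCase) {i : ℕ} (hi1 : 1 ≤ i) (hi2 : i ≤ rank c) {v : List ℤ}
    (hlen : v.length = rank c + 1) :
    sref c i (ofVec v) = ofVec (vref c i v) := by
  funext j
  show (ofVec v j) - (if j = i then pairing c i (ofVec v) else 0) = (vref c i v).getD j 0
  rw [pairing_ofVec c hi1]
  unfold vref
  rw [getD_map_range]
  by_cases hj : j < rank c + 1
  · simp [hj, ofVec]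
  · have hji : j ≠ i := by omega
    have h0 : v.getD j 0 = 0 := List.getD_eq_default _ _ (by omega)
    rw [if_neg hj, if_neg hji, sub_zero]
    exact h0

lemma stdb_eq (c : AffCase) {i : ℕ} (hi2 : i ≤ rank c) : stdb i = ofVec (evec c i) := by
  funext j
  unfold stdb ofVec evec
  rw [getD_map_range]
  by_cases hj : j < rank c + 1
  · simp [hj]
  · have hji : j ≠ i := by omega
    simp [hj, hji]

def RootIdx (c : AffCase) (α : ℕ → ℤ) : Prop := ∃ k, k < nroots c ∧ α = ofVec (g c k)

lemma rootIdx_sref (c : AffCase) {i : ℕ} {α : ℕ → ℤ} (hi : i ∈ I0 c) (h : RootIdx c α) :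
    RootIdx c (sref c i α) := by
  obtain ⟨k, hk, rfl⟩ := h
  rw [I0, Finset.mem_Icc] at hi
  have hfacts := (rootFacts c).2 k (List.mem_range.mpr hk)
  have hcl := (hfacts.2.2 (i-1) (List.mem_range.mpr (by omega))).1
  have heq : i - 1 + 1 = i := by omega
  rw [heq] at hcl
  exact ⟨_, hcl.2, by rw [ofVec_vref c hi.1 hi.2 hfacts.1, hcl.1]⟩

lemma rootIdx_of_mem (c : AffCase) {α : ℕ → ℤ} (hα : α ∈ Roots c) : RootIdx c α := by
  obtain ⟨w, hw, i, hi, rfl⟩ := hα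
  induction w with
  | nil =>
      rw [I0, Finset.mem_Icc] at hi
      have he := (rootFacts c).1 (i-1) (List.mem_range.mpr (by omega))
      have heq : i - 1 + 1 = i := by omega
      rw [heq] at he
      exact ⟨_, he.2, by rw [show wordApply c [] (stdb i) = stdb i from rfl, stdb_eq c hi.2, he.1]⟩
  | cons a w ih =>
      have h1 : RootIdx c (wordApply c w (stdb i)) := ih (fun x hx => hw x (by simp [hx]))
      exact rootIdx_sref c (hw a (by simp)) h1

lemma pos_ofVec {v : List ℤ} : (∀ j, 0 ≤ ofVec v j) ↔ (∀ x ∈ v, 0 ≤ x) := by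
  constructor
  · intro h x hx
    obtain ⟨m, hm, rfl⟩ := List.mem_iff_getElem.mp hx
    have := h m
    rwa [ofVec, List.getD_eq_getElem _ _ hm] at this
  · intro h j
    unfold ofVec
    by_cases hj : j < v.length
    · rw [List.getD_eq_getElem _ _ hj]
      exact h _ (List.getElem_mem _)
    · rw [List.getD_eq_default _ _ (by omega)]

lemma root_exists_ne {c : AffCase} {α : ℕ → ℤ} (h : RootIdx c α) : ∃ j, α j ≠ 0 := by
  obtain ⟨k, hk, rfl⟩ := h
  obtain ⟨x, hx, hx0⟩ := ((rootFacts c).2 k (List.mem_range.mpr hk)).2.1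
  obtain ⟨m, hm, rfl⟩ := List.mem_iff_getElem.mp hx
  exact ⟨m, by rwa [ofVec, List.getD_eq_getElem _ _ hm]⟩

lemma eq_stdb_of_sref_neg {c : AffCase} {i : ℕ} {α : ℕ → ℤ} (hi : i ∈ I0 c)
    (h : RootIdx c α) (hpos : ∀ j, 0 ≤ α j)
    (hneg : ¬ ∀ j, 0 ≤ sref c i α j) : α = stdb i := by
  obtain ⟨k, hk, rfl⟩ := h
  rw [I0, Finset.mem_Icc] at hi
  have hfacts := (rootFacts c).2 k (List.mem_range.mpr hk)
  have hD := (hfacts.2.2 (i-1) (List.mem_range.mpr (by omega))).2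
  have heq : i - 1 + 1 = i := by omega
  rw [heq] at hD
  rcases hD (pos_ofVec.mp hpos) with hcase | hcase
  · exact absurd (by rw [ofVec_vref c hi.1 hi.2 hfacts.1]; exact pos_ofVec.mpr hcase) hneg
  · rw [hcase, ← stdb_eq c hi.2]

/-! ### Bilinear form lemmas -/

lemma symz (c : AffCase) : ∀ i ∈ I0 c, ∀ j ∈ I0 c,
    dcoef c i * cartan c i j = dcoef c j * cartan c j i := by
  rcases c <;> decide

lemma sref_eq_sub (c : AffCase) (i : ℕ) (u : ℕ → ℤ) :
    sref c i u = u - pairing c i u • stdb i := by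
  funext j
  simp only [sref, Pi.sub_apply, Pi.smul_apply, stdb, smul_eq_mul]
  by_cases h : j = i <;> simp [h]

lemma bform_sub_left (c : AffCase) (u w v : ℕ → ℤ) :
    bform c (u - w) v = bform c u v - bform c w v := by
  unfold bform
  rw [← Finset.sum_sub_distrib]
  refine Finset.sum_congr rfl fun i _ => ?_
  rw [← Finset.sum_sub_distrib]
  refine Finset.sum_congr rfl fun j _ => ?_
  simp only [Pi.sub_apply]
  ring

lemma bform_sub_right (c : AffCase) (u w v : ℕ → ℤ) :
    bform c u (v - w) = bform c u v - bform c u w := by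
  unfold bform
  rw [← Finset.sum_sub_distrib]
  refine Finset.sum_congr rfl fun i _ => ?_
  rw [← Finset.sum_sub_distrib]
  refine Finset.sum_congr rfl fun j _ => ?_
  simp only [Pi.sub_apply]
  ring

lemma bform_smul_left (c : AffCase) (p : ℤ) (w v : ℕ → ℤ) :
    bform c (p • w) v = p * bform c w v := by
  unfold bform
  rw [Finset.mul_sum]
  refine Finset.sum_congr rfl fun i _ => ?_
  rw [Finset.mul_sum]
  refine Finset.sum_congr rfl fun j _ => ?_
  simp only [Pi.smul_apply, smul_eq_mul]
  ring

lemma bform_smul_right (c : AffCase) (p : ℤ) (w v : ℕ → ℤ) :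
    bform c v (p • w) = p * bform c v w := by
  unfold bform
  rw [Finset.mul_sum]
  refine Finset.sum_congr rfl fun i _ => ?_
  rw [Finset.mul_sum]
  refine Finset.sum_congr rfl fun j _ => ?_
  simp only [Pi.smul_apply, smul_eq_mul]
  ring

lemma bform_stdb_left (c : AffCase) {i : ℕ} (hi : i ∈ I0 c) (v : ℕ → ℤ) :
    bform c (stdb i) v = dcoef c i * pairing c i v := by
  unfold bform
  rw [Finset.sum_eq_single i]
  · unfold pairing
    rw [Finset.mul_sum]
    refine Finset.sum_congr rfl fun j _ => ?_
    simp [stdb]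
    ring
  · intro b _ hb
    apply Finset.sum_eq_zero
    intro j _
    simp [stdb, hb]
  · intro h
    exact absurd hi h

lemma bform_stdb_right (c : AffCase) {i : ℕ} (hi : i ∈ I0 c) (u : ℕ → ℤ) :
    bform c u (stdb i) = dcoef c i * pairing c i u := by
  unfold bform
  have h1 : ∀ i' ∈ I0 c, (∑ j ∈ I0 c, dcoef c i' * cartan c i' j * u i' * stdb i j)
      = dcoef c i * cartan c i i' * u i' := by
    intro i' hi'
    rw [Finset.sum_eq_single i]
    · simp only [stdb, if_pos, mul_one]
      rw [symz c i' hi' i hi]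
    · intro b _ hb
      simp [stdb, hb]
    · intro h
      exact absurd hi h
  rw [Finset.sum_congr rfl h1]
  unfold pairing
  rw [Finset.mul_sum]
  refine Finset.sum_congr rfl fun j _ => ?_
  ring

lemma bform_sref_swap (c : AffCase) {i : ℕ} (hi : i ∈ I0 c) (u v : ℕ → ℤ) :
    bform c (sref c i u) v = bform c u (sref c i v) := by
  rw [sref_eq_sub c i u, sref_eq_sub c i v, bform_sub_left, bform_sub_right,
    bform_smul_left, bform_smul_right, bform_stdb_left c hi, bform_stdb_right c hi]
  ring

lemma cartan_diag (c : AffCase) (i : ℕ) : cartan c i i = 2 := by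
  simp [cartan]

lemma pairing_sref_self (c : AffCase) {i : ℕ} (hi : i ∈ I0 c) (v : ℕ → ℤ) :
    pairing c i (sref c i v) = - pairing c i v := by
  unfold pairing sref
  have h1 : ∀ j ∈ I0 c, cartan c i j * (v j - if j = i then pairing c i v else 0)
      = cartan c i j * v j - (if j = i then 2 * pairing c i v else 0) := by
    intro j _
    by_cases h : j = i
    · subst h
      rw [if_pos rfl, if_pos rfl, cartan_diag]
      ring
    · simp [h]
  rw [Finset.sum_congr rfl h1, Finset.sum_sub_distrib, Finset.sum_ite_eq' (I0 c) i, if_pos hi]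
  unfold pairing
  ring

/-! ### Word application lemmas -/

lemma wordApply_concat (c : AffCase) (w : List ℕ) (a : ℕ) (α : ℕ → ℤ) :
    wordApply c (w ++ [a]) α = wordApply c w (sref c a α) := by
  unfold wordApply
  rw [List.foldr_append]
  rfl

lemma dcoef_pos (c : AffCase) (i : ℕ) : 0 < dcoef c i := by
  rcases c <;> simp only [dcoef] <;> (try split_ifs) <;> norm_num

/-! ### The key lemma -/

lemma key_s5 (c : AffCase) (f : ℕ → ℕ) (L : ℕ)
    (hmem : ∀ k, 1 ≤ k → k ≤ L → f k ∈ I0 c)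
    (hp : ∀ k, 1 ≤ k → k ≤ L →
      pairing c (f k) (srefs c f (k-1) (stdb 2)) = -(cconst c)) :
    ∀ k, k ≤ L → ∀ α, α ∈ PosRoots c →
      (∀ j, wordApply c ((List.range k).map (fun m => f (m+1))) α j ≤ 0) →
      0 < bform c α (srefs c f k (stdb 2)) := by
  intro k
  induction k with
  | zero =>
      intro _ α hα hneg
      exfalso
      obtain ⟨j, hj⟩ := root_exists_ne (rootIdx_of_mem c hα.1)
      have h1 := hα.2 j
      have h2 : α j ≤ 0 := hneg j
      omega
  | succ k ih =>
      intro hkL α hα hneg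
      have hi : f (k+1) ∈ I0 c := hmem (k+1) (by omega) hkL
      have hw : (List.range (k+1)).map (fun m => f (m+1)) =
          (List.range k).map (fun m => f (m+1)) ++ [f (k+1)] := by
        rw [List.range_succ, List.map_append]
        rfl
      have hneg' : ∀ j,
          wordApply c ((List.range k).map (fun m => f (m+1))) (sref c (f (k+1)) α) j ≤ 0 := by
        intro j
        have := hneg j
        rwa [hw, wordApply_concat] at this
      have hβ : srefs c f (k+1) (stdb 2) = sref c (f (k+1)) (srefs c f k (stdb 2)) := rfl
      by_cases hpos : ∀ j, 0 ≤ sref c (f (k+1)) α j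
      · have hroot : sref c (f (k+1)) α ∈ Roots c := by
          obtain ⟨w, hww, i0, hi0, heq⟩ := hα.1
          exact ⟨f (k+1) :: w, fun x hx => by
            rcases List.mem_cons.mp hx with h | h
            · rw [h]; exact hi
            · exact hww x h, i0, hi0, by rw [heq]; rfl⟩
        have := ih (by omega) _ ⟨hroot, hpos⟩ hneg'
        rw [hβ, ← bform_sref_swap c hi]
        exact this
      · have hαe : α = stdb (f (k+1)) :=
          eq_stdb_of_sref_neg hi (rootIdx_of_mem c hα.1) hα.2 hpos
        rw [hαe, hβ, bform_stdb_left c hi, pairing_sref_self c hi]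
        have hpk := hp (k+1) (by omega) hkL
        rw [Nat.add_sub_cancel] at hpk
        rw [hpk, neg_neg]
        exact mul_pos (dcoef_pos c _) (cconst_pos c)

lemma I01_sub (c : AffCase) {x : ℕ} (h : x ∈ I01 c) : x ∈ I0 c := by
  rw [I01, Finset.mem_Icc] at h
  rw [I0, Finset.mem_Icc]
  omega

lemma Jset_sub (c : AffCase) : Jset c ⊆ I0 c := by
  rcases c <;> decide

theorem stmt5 (c : AffCase) :
    (∀ (L : ℕ) (f : ℕ → ℕ), IsISeq c L f → ∀ α ∈ PosRoots c,
      (-(wordApply c ((List.range L).map (fun k => f (k+1))) α)) ∈ PosRoots c →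
      0 < bform c α (theta1 c)) ∧
    (∀ (L' : ℕ) (g : ℕ → ℕ), IsJSeq c L' g → ∀ α ∈ PosRoots c,
      (-(wordApply c ((List.range L').map (fun k => g (k+1))) α)) ∈ PosRoots c →
      0 < bform c α (thetaJ c)) := by
  constructor
  · rintro L f ⟨hmem, -, hp, hLast⟩ α hα hneg
    have h1 : ∀ k, 1 ≤ k → k ≤ L → f k ∈ I0 c := fun k _ h2 => I01_sub c (hmem k h2)
    have h2 := key_s5 c f L h1 hp L le_rfl α hα (fun j => by
      have := hneg.2 j
      simp only [Pi.neg_apply] at this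
      omega)
    rwa [hLast] at h2
  · rintro L f ⟨hmem, -, hp, hLast⟩ α hα hneg
    have h1 : ∀ k, 1 ≤ k → k ≤ L → f k ∈ I0 c := fun k _ h2 => Jset_sub c (hmem k h2)
    have h2 := key_s5 c f L h1 hp L le_rfl α hα (fun j => by
      have := hneg.2 j
      simp only [Pi.neg_apply] at this
      omega)
    rwa [hLast] at h2
end

section
/- For every positive integer ℓ, the image of S_ℓ under φ is exactly T_ℓ, i.e., φ(S_ℓ) = T_ℓ. -/
/-- The set `S_ℓ ⊆ Z_{≥0}^6` (coordinates `p 0, …, p 5` are `p_1, …, p_6`). -/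
def Sset (ℓ : ℤ) : Set (Fin 6 → ℤ) :=
  {p | (∀ i, 0 ≤ p i) ∧ p 5 ≤ p 4 ∧ p 4 ≤ p 3 ∧ p 3 ≤ p 2 ∧ p 2 ≤ p 1 ∧
       p 1 + p 2 + p 3 - p 4 ≤ p 0 ∧ p 0 ≤ p 3 + ℓ}

/-- The set `T_ℓ ⊆ Z_{≥0}^5` (coordinates `r 0, …, r 4` are `r_1, …, r_5`). -/
def Tset (ℓ : ℤ) : Set (Fin 5 → ℤ) :=
  {r | (∀ i, 0 ≤ r i) ∧ r 0 + r 1 + r 2 + r 3 ≤ ℓ ∧ r 3 + 2 * r 4 ≤ r 1}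

/-- The map `φ(p_1,…,p_6) = (p_6, p_1−p_2−p_6, p_2−p_3, p_3−p_4, p_4−p_5)`. -/
def phi (p : Fin 6 → ℤ) : Fin 5 → ℤ :=
  ![p 5, p 0 - p 1 - p 5, p 1 - p 2, p 2 - p 3, p 3 - p 4]

/-- Coordinates of `wt(p)` in the basis `(ϖ_1, ϖ_2, γ_1, γ_2)`. -/
def wtc (p : Fin 6 → ℤ) : Fin 4 → ℤ :=
  ![p 0 - p 1 - p 2 - p 3 + 2 * p 4 - p 5, -p 0 + 2 * p 3 - p 4, p 1 - p 2, p 2 - p 3]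

/-- Coordinates of `wt_T(r)` in the basis `(ϖ_1, ϖ_2, γ_1, γ_2)`. -/
def wtcT (r : Fin 5 → ℤ) : Fin 4 → ℤ :=
  ![r 1 - r 3 - 2 * r 4, -r 0 - r 1 - r 2 - r 3 + r 4, r 2, r 3]

lemma vec6_five (a b c d e f : ℤ) : (![a, b, c, d, e, f] : Fin 6 → ℤ) 5 = f := rfl

theorem stmt9 (ℓ : ℤ) (hℓ : 0 < ℓ) : phi '' Sset ℓ = Tset ℓ := by
  ext r
  constructor
  · rintro ⟨p, ⟨hpos, h54, h43, h32, h21, hlo, hhi⟩, rfl⟩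
    have h0 := hpos 0; have h1 := hpos 1; have h2 := hpos 2
    have h3 := hpos 3; have h4 := hpos 4; have h5 := hpos 5
    refine ⟨fun i => ?_, ?_, ?_⟩
    · fin_cases i <;> simp [phi, Matrix.cons_val_succ, vec6_five] <;> linarith
    · simp [phi, Matrix.cons_val_succ, vec6_five]; linarith
    · simp [phi, Matrix.cons_val_succ, vec6_five]; linarith
  · rintro ⟨hpos, hsum, hr⟩
    have h0 := hpos 0; have h1 := hpos 1; have h2 := hpos 2
    have h3 := hpos 3; have h4 := hpos 4
    refine ⟨![2 * r 0 + r 1 + r 2 + r 3 + r 4, r 0 + r 2 + r 3 + r 4,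
      r 0 + r 3 + r 4, r 0 + r 4, r 0, r 0], ⟨fun i => ?_, ?_, ?_, ?_, ?_, ?_, ?_⟩, ?_⟩
    · fin_cases i <;> simp [Matrix.cons_val_succ, vec6_five] <;> linarith
    · simp [Matrix.cons_val_succ, vec6_five]
    · simp [Matrix.cons_val_succ, vec6_five]; linarith
    · simp [Matrix.cons_val_succ, vec6_five]; linarith
    · simp [Matrix.cons_val_succ, vec6_five]; linarith
    · simp [Matrix.cons_val_succ, vec6_five]; linarith
    · simp [Matrix.cons_val_succ, vec6_five]; linarith
    · funext i; fin_cases i <;> simp [phi, Matrix.cons_val_succ, vec6_five] <;> ring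
end

section
/- For every positive integer ℓ and every μ ∈ Z^4, the number of elements p ∈ S_ℓ with wtc(p) = μ equals Σ_{r ∈ T_ℓ, wtcT(r) = μ} (1 + r_2 − r_4 − 2r_5). (This is the combinatorial identity underlying condition (C1): the list of weights (wt(p))_{p ∈ S_ℓ} coincides, with multiplicity, with the list of weights wt_T(r) each counted 1 + r_2 − r_4 − 2r_5 times over r ∈ T_ℓ.) -/
/-!
The map `p ↦ (phi p, p_5)` is a bijection `ℤ⁶ ≃ ℤ⁵ × ℤ` under which `S_ℓ` corresponds to the pairs
`(r, t)` with `r ∈ T_ℓ` and `r_1 ≤ t ≤ r_1 + r_2 − r_4 − 2 r_5`, and `wtc` becomes `wtcT ∘ phi`.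
So `S_ℓ ∩ wtc⁻¹(μ)` is the disjoint union over `r ∈ T_ℓ ∩ wtcT⁻¹(μ)` of fibres of size
`1 + r_2 − r_4 − 2 r_5`.
-/

def psi (r : Fin 5 → ℤ) (t : ℤ) : Fin 6 → ℤ :=
  ![t + r 0 + r 1 + r 2 + r 3 + r 4, t + r 2 + r 3 + r 4, t + r 3 + r 4, t + r 4, t, r 0]

lemma phi_psi (r : Fin 5 → ℤ) (t : ℤ) : phi (psi r t) = r := by
  ext i
  fin_cases i <;> simp [phi, psi]
  ring

lemma psi_phi (p : Fin 6 → ℤ) : psi (phi p) (p 4) = p := by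
  ext i
  fin_cases i <;> simp [phi, psi] <;> ring

lemma psi_injective (r : Fin 5 → ℤ) : Function.Injective (psi r) := fun s t h => by
  simpa [psi] using congrFun h 4

lemma pairwiseDisjoint_image_psi (s : Set (Fin 5 → ℤ)) (I : (Fin 5 → ℤ) → Set ℤ) :
    s.PairwiseDisjoint fun r => psi r '' I r := by
  rintro r - r' - hne
  refine Set.disjoint_left.2 ?_
  rintro _ ⟨t, -, rfl⟩ ⟨t', -, h⟩
  exact hne (by rw [← phi_psi r t, ← h, phi_psi])

lemma wtc_psi (r : Fin 5 → ℤ) (t : ℤ) : wtc (psi r t) = wtcT r := by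
  ext i
  fin_cases i <;> simp [wtc, wtcT, psi] <;> ring

lemma psi_mem_Sset_iff (ℓ : ℤ) (r : Fin 5 → ℤ) (t : ℤ) :
    psi r t ∈ Sset ℓ ↔ r ∈ Tset ℓ ∧ t ∈ Set.Icc (r 0) (r 0 + (r 1 - r 3 - 2 * r 4)) := by
  simp only [Sset, Tset, psi, Set.mem_ofPred_eq, Set.mem_Icc, Fin.forall_fin_succ,
    Fin.succ_zero_eq_one, Fin.succ_one_eq_two, Fin.reduceSucc, IsEmpty.forall_iff, and_true,
    Matrix.cons_val_zero, Matrix.cons_val_one, Matrix.cons_val]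
  omega

lemma Tset_finite (ℓ : ℤ) : (Tset ℓ).Finite := by
  refine (Set.Finite.pi' fun _ => Set.finite_Icc (0 : ℤ) ℓ).subset ?_
  rintro r ⟨hpos, hsum, hr⟩ i
  have := hpos 0; have := hpos 1; have := hpos 2; have := hpos 3; have := hpos 4
  exact ⟨hpos i, by fin_cases i <;> simp <;> omega⟩

lemma Int.ncard_Icc_of_le {a b : ℤ} (h : a ≤ b + 1) : ((Set.Icc a b).ncard : ℤ) = b + 1 - a := by
  rw [← Finset.coe_Icc, Set.ncard_coe_finset, Int.card_Icc_of_le a b h]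

lemma setOf_mem_Sset_wtc_eq (ℓ : ℤ) (μ : Fin 4 → ℤ) :
    {p : Fin 6 → ℤ | p ∈ Sset ℓ ∧ wtc p = μ} =
      ⋃ r ∈ {r : Fin 5 → ℤ | r ∈ Tset ℓ ∧ wtcT r = μ},
        psi r '' Set.Icc (r 0) (r 0 + (r 1 - r 3 - 2 * r 4)) := by
  ext p
  simp only [Set.mem_ofPred_eq, Set.mem_iUnion, Set.mem_image, exists_prop]
  constructor
  · rintro ⟨hp, rfl⟩
    rw [← psi_phi p, psi_mem_Sset_iff] at hp
    exact ⟨phi p, ⟨hp.1, by rw [← wtc_psi (phi p) (p 4), psi_phi]⟩, p 4, hp.2, psi_phi p⟩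
  · rintro ⟨r, ⟨hr, rfl⟩, t, ht, rfl⟩
    exact ⟨(psi_mem_Sset_iff ℓ r t).2 ⟨hr, ht⟩, wtc_psi r t⟩

theorem stmt12_general (ℓ : ℤ) (μ : Fin 4 → ℤ) :
    (Set.ncard {p : Fin 6 → ℤ | p ∈ Sset ℓ ∧ wtc p = μ} : ℤ) =
      ∑ᶠ (r : Fin 5 → ℤ) (_ : r ∈ Tset ℓ ∧ wtcT r = μ),
        (1 + r 1 - r 3 - 2 * r 4) := by
  have hfin : {r : Fin 5 → ℤ | r ∈ Tset ℓ ∧ wtcT r = μ}.Finite :=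
    (Tset_finite ℓ).subset fun r hr => hr.1
  rw [setOf_mem_Sset_wtc_eq, hfin.ncard_biUnion (fun r _ => (Set.finite_Icc _ _).image _)
    (pairwiseDisjoint_image_psi _ _), Nat.cast_finsum_mem hfin]
  refine finsum_mem_congr rfl fun r ⟨⟨_, _, hr⟩, _⟩ => ?_
  rw [Set.ncard_image_of_injective _ (psi_injective r), Int.ncard_Icc_of_le (by omega)]
  ring

theorem stmt12 (ℓ : ℤ) (hℓ : 0 < ℓ) (μ : Fin 4 → ℤ) :
    (Set.ncard {p : Fin 6 → ℤ | p ∈ Sset ℓ ∧ wtc p = μ} : ℤ) =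
      ∑ᶠ (r : Fin 5 → ℤ) (_ : r ∈ Tset ℓ ∧ wtcT r = μ),
        (1 + r 1 - r 3 - 2 * r 4) :=
  stmt12_general ℓ μ
end
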